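/- arXiv:2207.14484 — 6 statements merged into one kernel-verified Lean document; each statement's English description precedes it below -/
import Mathlib

section
/- For the quadratic recurrence characteristic polynomial p(z) = z² − (1 + β − ηa) z + β with 0 ≤ β < 1, η > 0, a > 0: p has a real root of magnitude greater than 1 if and only if a > (2 + 2β)/η or a < 0; in particular, when a = (2+2β)/η, the root z = −1 satisfies p(−1) = 0. -/
/-!
For `q ≤ 1`, the monic quadratic `p z = z² - s z + q` has a root `z > 1` exactly when `p 1 < 0`:
the identity `p z = (z - 1)(z - q) + p 1 · z` rules out such a root when `p 1 ≥ 0`, and when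
`p 1 < 0` the larger root lies beyond `1`. Reflecting `z ↦ -z` gives the same criterion at `-1`.
For the heavy-ball polynomial (`s = 1 + β - ηa`, `q = β`) we have `p 1 = ηa` and
`p (-1) = 2 + 2β - ηa`.
-/

lemma exists_root_gt_of_quadratic_neg {s q t : ℝ} (h : t ^ 2 - s * t + q < 0) :
    ∃ z, t < z ∧ z ^ 2 - s * z + q = 0 := by
  have hdisc : 0 ≤ s ^ 2 - 4 * q := by nlinarith [sq_nonneg (2 * t - s)]
  set d := √(s ^ 2 - 4 * q)
  have hd : d ^ 2 = s ^ 2 - 4 * q := Real.sq_sqrt hdisc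
  -- `(2t - s)² = s² - 4q + 4 p t` with `p t < 0`, so the larger root `(s + d) / 2` exceeds `t`.
  have hlt : 2 * t - s < d :=
    lt_of_abs_lt (abs_lt_of_sq_lt_sq (by nlinarith) (Real.sqrt_nonneg _))
  exact ⟨(s + d) / 2, by linarith, by linear_combination hd / 4⟩

lemma exists_root_gt_one_iff {s q : ℝ} (hq : q ≤ 1) :
    (∃ z, 1 < z ∧ z ^ 2 - s * z + q = 0) ↔ 1 - s + q < 0 := by
  refine ⟨fun ⟨z, hz, hroot⟩ => ?_, fun h => exists_root_gt_of_quadratic_neg (by linarith)⟩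
  have hsplit : (1 - s + q) * z = -((z - 1) * (z - q)) := by linear_combination hroot
  have hpos : 0 < (z - 1) * (z - q) := mul_pos (by linarith) (by linarith)
  nlinarith

lemma exists_root_lt_neg_one_iff {s q : ℝ} (hq : q ≤ 1) :
    (∃ z, z < -1 ∧ z ^ 2 - s * z + q = 0) ↔ 1 + s + q < 0 := by
  have hreflect := exists_root_gt_one_iff (s := -s) hq
  rw [sub_neg_eq_add] at hreflect
  rw [← hreflect]
  constructor
  · rintro ⟨z, hz, hroot⟩
    exact ⟨-z, by linarith, by linear_combination hroot⟩
  · rintro ⟨z, hz, hroot⟩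
    exact ⟨-z, by linarith, by linear_combination hroot⟩

theorem heavyball_charpoly_root_general (β η : ℝ) (hβ1 : β < 1) (hη : 0 < η) :
    (∀ a : ℝ,
      (∃ z : ℝ, z ^ 2 - (1 + β - η * a) * z + β = 0 ∧ |z| > 1) ↔
        (a > (2 + 2 * β) / η ∨ a < 0)) ∧
    ((-1 : ℝ) ^ 2 - (1 + β - η * ((2 + 2 * β) / η)) * (-1) + β = 0) := by
  refine ⟨fun a => ?_, by field_simp; ring⟩
  have hsides : (∃ z : ℝ, z ^ 2 - (1 + β - η * a) * z + β = 0 ∧ |z| > 1) ↔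
      (∃ z, z < -1 ∧ z ^ 2 - (1 + β - η * a) * z + β = 0) ∨
        (∃ z, 1 < z ∧ z ^ 2 - (1 + β - η * a) * z + β = 0) := by
    simp only [gt_iff_lt, lt_abs, lt_neg, and_or_left, exists_or, and_comm, or_comm]
  rw [hsides, exists_root_lt_neg_one_iff hβ1.le, exists_root_gt_one_iff hβ1.le,
    gt_iff_lt, div_lt_iff₀ hη]
  constructor
  · rintro (h | h)
    · exact Or.inl (by linarith)
    · exact Or.inr (neg_of_mul_neg_right (by linarith) hη.le)
  · rintro (h | h)
    · exact Or.inl (by linarith)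
    · exact Or.inr (by linarith [mul_neg_of_pos_of_neg hη h])

theorem heavyball_charpoly_root (β η : ℝ) (hβ0 : 0 ≤ β) (hβ1 : β < 1) (hη : 0 < η) :
    (∀ a : ℝ,
      (∃ z : ℝ, z ^ 2 - (1 + β - η * a) * z + β = 0 ∧ |z| > 1) ↔
        (a > (2 + 2 * β) / η ∨ a < 0)) ∧
    ((-1 : ℝ) ^ 2 - (1 + β - η * ((2 + 2 * β) / η)) * (-1) + β = 0) :=
  heavyball_charpoly_root_general β η hβ1 hη
end

section
/- Let A be a symmetric matrix with eigenvector q and eigenvalue a. If the iterates of EmaHB(η, β₁) on f(x) = (1/2)xᵀAx + bᵀx + c are run with 0 ≤ β₁ < 1, η > 0, and a > (2 + 2β₁)/(η(1−β₁)), then for generic initializations the sequence qᵀx_t diverges in absolute value. -/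
/-!
Projected onto the eigenvector `q`, EmaHB becomes the scalar recurrence
`y (t+2) = c y (t+1) - β₁ y t - η (1 - β₁) qᵀb` with `c = 1 + β₁ - η (1 - β₁) a`. Its deviation
from the fixed point `y* = -qᵀb / a` is `α rᵗ + B sᵗ`, where `r, s` are the roots of
`X² - c X + β₁`. The step-size condition says exactly `c < -(1 + β₁)`, which puts `r` below `-1`
and `s` in `[-1, 1]`; the genericity condition says `α ≠ 0`, so the `rᵗ` term dominates.
-/

open Filter Matrix

theorem eq_geom_add_geom_of_rec {K : Type*} [Field K] {r s : K} (hrs : r ≠ s) {z : ℕ → K}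
    (hz : ∀ t, z (t + 2) = (r + s) * z (t + 1) - r * s * z t) (t : ℕ) :
    z t = (z 1 - s * z 0) / (r - s) * r ^ t + (r * z 0 - z 1) / (r - s) * s ^ t := by
  have hrs' : r - s ≠ 0 := sub_ne_zero.2 hrs
  induction t using Nat.twoStepInduction with
  | zero => field_simp; ring
  | one => field_simp; ring
  | more t ih₀ ih₁ => rw [hz, ih₀, ih₁]; ring

theorem tendsto_abs_geom_add_geom_add_const {α r s : ℝ} (hα : α ≠ 0) (hr : 1 < |r|)
    (hs : |s| ≤ 1) (B C : ℝ) :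
    Tendsto (fun t : ℕ => |α * r ^ t + B * s ^ t + C|) atTop atTop := by
  have hgrow : Tendsto (fun t : ℕ => |α| * |r| ^ t - (|B| + |C|)) atTop atTop :=
    tendsto_atTop_add_const_right _ _
      ((tendsto_pow_atTop_atTop_of_one_lt hr).const_mul_atTop (abs_pos.2 hα))
  refine tendsto_atTop_mono (fun t => ?_) hgrow
  have hBs : |B * s ^ t| ≤ |B| := by
    rw [abs_mul, abs_pow]
    exact mul_le_of_le_one_right (abs_nonneg B) (pow_le_one₀ (abs_nonneg s) hs)
  have hαr : |α * r ^ t| = |α| * |r| ^ t := by rw [abs_mul, abs_pow]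
  have htri := abs_add_three (α * r ^ t + B * s ^ t + C) (-(B * s ^ t)) (-C)
  rw [abs_neg, abs_neg, show α * r ^ t + B * s ^ t + C + -(B * s ^ t) + -C = α * r ^ t by ring,
    hαr] at htri
  linarith

theorem exists_roots_of_lt_neg_one_sub {β c : ℝ} (hβ : 0 ≤ β) (hc : c < -(1 + β)) :
    ∃ r s : ℝ, r + s = c ∧ r * s = β ∧ 1 < |r| ∧ |s| ≤ 1 := by
  have hc2 : (1 + β) ^ 2 < c ^ 2 := by nlinarith
  have hD : 0 ≤ c ^ 2 - 4 * β := by nlinarith [sq_nonneg (1 - β)]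
  set d := √(c ^ 2 - 4 * β)
  have hd_lt : c + 2 < d := Real.lt_sqrt_of_sq_lt (by nlinarith)
  have hd_le : d ≤ -c := (Real.sqrt_le_left (by linarith)).2 (by nlinarith)
  have hd_ge : -(c + 2) ≤ d := (neg_le_abs _).trans (Real.abs_le_sqrt (by nlinarith))
  refine ⟨(c - d) / 2, (c + d) / 2, by ring, ?_, ?_, abs_le.2 ⟨by linarith, by linarith⟩⟩
  · linear_combination -(Real.sq_sqrt hD) / 4
  · rw [abs_of_neg (by linarith)]
    linarith

section EmaHB

variable {ι R : Type*} [Fintype ι] [CommRing R] {A : Matrix ι ι R} {q : ι → R} {a : R}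

theorem dotProduct_mulVec_of_isSymm_of_mulVec_eq (hA : A.IsSymm) (heig : A *ᵥ q = a • q)
    (v : ι → R) : q ⬝ᵥ A *ᵥ v = a * (q ⬝ᵥ v) := by
  rw [dotProduct_mulVec, ← mulVec_transpose, hA.eq, heig, smul_dotProduct, smul_eq_mul]

theorem emaHB_dotProduct_rec (hA : A.IsSymm) (heig : A *ᵥ q = a • q) (b : ι → R) {η β : R}
    {x m : ℕ → ι → R} (hm : ∀ t, m (t + 1) = β • m t + (1 - β) • (A *ᵥ x t + b))
    (hx : ∀ t, x (t + 1) = x t - η • m (t + 1)) (t : ℕ) :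
    q ⬝ᵥ x (t + 2) = (1 + β - η * (1 - β) * a) * q ⬝ᵥ x (t + 1) - β * q ⬝ᵥ x t
      - η * (1 - β) * (q ⬝ᵥ b) := by
  have hx' : ∀ t, q ⬝ᵥ x (t + 1) = q ⬝ᵥ x t - η * q ⬝ᵥ m (t + 1) := fun t => by
    rw [hx, dotProduct_sub, dotProduct_smul, smul_eq_mul]
  have hm' : q ⬝ᵥ m (t + 2) = β * q ⬝ᵥ m (t + 1) + (1 - β) * (a * q ⬝ᵥ x (t + 1) + q ⬝ᵥ b) := by
    rw [hm, dotProduct_add, dotProduct_smul, dotProduct_smul, dotProduct_add,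
      dotProduct_mulVec_of_isSymm_of_mulVec_eq hA heig, smul_eq_mul, smul_eq_mul]
  linear_combination hx' (t + 1) - η * hm' - β * hx' t

end EmaHB

theorem emaHB_unstable_eigendirection_general (n : ℕ) (A : Matrix (Fin n) (Fin n) ℝ)
    (hA : A.IsSymm) (q : Fin n → ℝ) (a : ℝ)
    (heig : A.mulVec q = a • q) (b : Fin n → ℝ) (η β₁ : ℝ)
    (hβ0 : 0 ≤ β₁) (hβ1 : β₁ < 1) (hη : 0 < η)
    (hsharp : a > (2 + 2 * β₁) / (η * (1 - β₁))) :
    ∃ r s ystar : ℝ,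
      r ^ 2 - (1 + β₁ - η * (1 - β₁) * a) * r + β₁ = 0 ∧
      s ^ 2 - (1 + β₁ - η * (1 - β₁) * a) * s + β₁ = 0 ∧
      |r| > 1 ∧
      ystar = (1 + β₁ - η * (1 - β₁) * a) * ystar - β₁ * ystar
        - η * (1 - β₁) * (q ⬝ᵥ b) ∧
      ∀ x m : ℕ → Fin n → ℝ,
        (∀ t, m (t + 1) = β₁ • m t + (1 - β₁) • (A.mulVec (x t) + b)) →
        (∀ t, x (t + 1) = x t - η • m (t + 1)) →
        q ⬝ᵥ x 1 - ystar ≠ s * (q ⬝ᵥ x 0 - ystar) →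
        Tendsto (fun t => |q ⬝ᵥ x t|) atTop atTop := by
  have hstep : 0 < η * (1 - β₁) := mul_pos hη (by linarith)
  have ha : a ≠ 0 := (lt_trans (div_pos (by linarith) hstep) hsharp).ne'
  have hc : 1 + β₁ - η * (1 - β₁) * a < -(1 + β₁) := by
    rw [gt_iff_lt, div_lt_iff₀ hstep] at hsharp
    linarith
  obtain ⟨r, s, hsum, hprod, hr, hs⟩ := exists_roots_of_lt_neg_one_sub hβ0 hc
  set ystar : ℝ := -(q ⬝ᵥ b) / a with hystar
  have hfix : ystar = (1 + β₁ - η * (1 - β₁) * a) * ystar - β₁ * ystar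
      - η * (1 - β₁) * (q ⬝ᵥ b) := by
    rw [hystar]
    field_simp
    ring
  refine ⟨r, s, ystar, by linear_combination r * hsum - hprod,
    by linear_combination s * hsum - hprod, hr, hfix, ?_⟩
  intro x m hm hx hinit
  set z : ℕ → ℝ := fun t => q ⬝ᵥ x t - ystar
  have hz : ∀ t, z (t + 2) = (r + s) * z (t + 1) - r * s * z t := fun t => by
    rw [hsum, hprod]
    linear_combination emaHB_dotProduct_rec hA heig b hm hx t - hfix
  have hrs : r ≠ s := by rintro rfl; linarith
  have hα : (z 1 - s * z 0) / (r - s) ≠ 0 := div_ne_zero (sub_ne_zero.2 hinit) (sub_ne_zero.2 hrs)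
  refine (tendsto_abs_geom_add_geom_add_const hα hr hs ((r * z 0 - z 1) / (r - s))
    ystar).congr fun t => ?_
  rw [← eq_geom_add_geom_of_rec hrs hz t, sub_add_cancel]

theorem emaHB_unstable_eigendirection (n : ℕ) (A : Matrix (Fin n) (Fin n) ℝ)
    (hA : A.IsSymm) (q : Fin n → ℝ) (hq : q ≠ 0) (a : ℝ)
    (heig : A.mulVec q = a • q) (b : Fin n → ℝ) (η β₁ : ℝ)
    (hβ0 : 0 ≤ β₁) (hβ1 : β₁ < 1) (hη : 0 < η)
    (hsharp : a > (2 + 2 * β₁) / (η * (1 - β₁))) :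
    ∃ r s ystar : ℝ,
      r ^ 2 - (1 + β₁ - η * (1 - β₁) * a) * r + β₁ = 0 ∧
      s ^ 2 - (1 + β₁ - η * (1 - β₁) * a) * s + β₁ = 0 ∧
      |r| > 1 ∧
      ystar = (1 + β₁ - η * (1 - β₁) * a) * ystar - β₁ * ystar
        - η * (1 - β₁) * (q ⬝ᵥ b) ∧
      ∀ x m : ℕ → Fin n → ℝ,
        (∀ t, m (t + 1) = β₁ • m t + (1 - β₁) • (A.mulVec (x t) + b)) →
        (∀ t, x (t + 1) = x t - η • m (t + 1)) →
        q ⬝ᵥ x 1 - ystar ≠ s * (q ⬝ᵥ x 0 - ystar) →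
        Tendsto (fun t => |q ⬝ᵥ x t|) atTop atTop :=
  emaHB_unstable_eigendirection_general n A hA q a heig b η β₁ hβ0 hβ1 hη hsharp
end

section
/- Let q be an eigenvector of the symmetric matrix A with eigenvalue a. If EmaNesterov(η, β₁) is run on f(x) = (1/2)xᵀAx + bᵀx + c with 0 ≤ β₁ < 1, η > 0, and a > (2 + 2β₁)/(η(1−β₁)(1 + 2β₁)), then for generic initializations the sequence qᵀx_t diverges. -/
/-!
Along the eigenvector `q`, the iterates `y t = q ⬝ᵥ x t` satisfy the affine recurrence
`y (t + 2) = (1 + β₁) μ y (t + 1) - β₁ μ y t - η (1 - β₁) (q ⬝ᵥ b)` with `μ = 1 - η (1 - β₁) a`.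
The sharpness condition on `a` says exactly that the characteristic polynomial
`X ^ 2 - (1 + β₁) μ X + β₁ μ` is negative at `-1`, so it has real roots `r < -1 < s`; as the sum
`(1 + β₁) μ` of the roots is negative, `r` is the dominant one. A solution of the recurrence is
`y⋆ + α r ^ t + γ s ^ t`, and `α ≠ 0` exactly when `y 1 - y⋆ ≠ s (y 0 - y⋆)`.
-/

open Filter Matrix Bornology

theorem Matrix.IsSymm.dotProduct_mulVec_of_mulVec_eq_smul {R ι : Type*} [CommSemiring R]
    [Fintype ι] {A : Matrix ι ι R} (hA : A.IsSymm) {q : ι → R} {a : R} (hq : A *ᵥ q = a • q)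
    (v : ι → R) : q ⬝ᵥ A *ᵥ v = a * (q ⬝ᵥ v) := by
  rw [dotProduct_mulVec, ← hA.eq, vecMul_transpose, hq, smul_dotProduct, smul_eq_mul]

-- The roots of `X ^ 2 - P X + Q`, which is negative at `-1`.
theorem exists_add_eq_mul_eq_lt_neg_one_lt {P Q : ℝ} (h : 1 + P + Q < 0) :
    ∃ r s : ℝ, r + s = P ∧ r * s = Q ∧ r < -1 ∧ -1 < s := by
  set d := √(P ^ 2 - 4 * Q)
  have hd : d ^ 2 = P ^ 2 - 4 * Q := Real.sq_sqrt (by nlinarith [sq_nonneg (P + 2)])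
  have hPd : |P + 2| < d := Real.lt_sqrt_of_sq_lt (by rw [sq_abs]; linarith)
  refine ⟨(P - d) / 2, (P + d) / 2, by ring, by linear_combination -hd / 4, ?_, ?_⟩
  · linarith [le_abs_self (P + 2)]
  · linarith [neg_abs_le (P + 2)]

section Recurrence

variable {R : Type*} {r s : R} {z : ℕ → R}

theorem sub_mul_eq_pow_mul_of_recurrence [CommRing R]
    (hz : ∀ t, z (t + 2) = (r + s) * z (t + 1) - r * s * z t) (t : ℕ) :
    z (t + 1) - s * z t = r ^ t * (z 1 - s * z 0) := by
  induction t with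
  | zero => ring
  | succ t ih => rw [hz, pow_succ]; linear_combination r * ih

theorem sub_mul_eq_of_recurrence [CommRing R]
    (hz : ∀ t, z (t + 2) = (r + s) * z (t + 1) - r * s * z t) (t : ℕ) :
    (r - s) * z t = (z 1 - s * z 0) * r ^ t - (z 1 - r * z 0) * s ^ t := by
  have hz' : ∀ t, z (t + 2) = (s + r) * z (t + 1) - s * r * z t := fun t => by
    rw [hz]; ring
  linear_combination sub_mul_eq_pow_mul_of_recurrence hz t -
    sub_mul_eq_pow_mul_of_recurrence hz' t

theorem tendsto_mul_pow_add_mul_pow_cobounded [NormedField R] (α γ : R) (hα : α ≠ 0)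
    (hr : 1 < ‖r‖) (hsr : ‖s‖ < ‖r‖) :
    Tendsto (fun t : ℕ => α * r ^ t + γ * s ^ t) atTop (cobounded R) := by
  have hr0 : r ≠ 0 := norm_pos_iff.mp (by linarith)
  have hratio : Tendsto (fun t : ℕ => α + γ * (s / r) ^ t) atTop (nhds α) := by
    have := tendsto_pow_atTop_nhds_zero_of_norm_lt_one
      (by rwa [norm_div, div_lt_one (by linarith)] : ‖s / r‖ < 1)
    simpa using (this.const_mul γ).const_add α
  rw [← tendsto_norm_atTop_iff_cobounded]
  have hfactor : ∀ t : ℕ, ‖α * r ^ t + γ * s ^ t‖ = ‖r‖ ^ t * ‖α + γ * (s / r) ^ t‖ := fun t => by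
    rw [← norm_pow, ← norm_mul]
    congr 1
    rw [div_pow]
    field_simp
  simpa only [hfactor] using
    (tendsto_pow_atTop_atTop_of_one_lt hr).atTop_mul_pos (norm_pos_iff.mpr hα) hratio.norm

theorem tendsto_cobounded_of_recurrence [NormedField R] (hr : 1 < ‖r‖) (hsr : ‖s‖ < ‖r‖)
    (hz : ∀ t, z (t + 2) = (r + s) * z (t + 1) - r * s * z t) (hgen : z 1 ≠ s * z 0) :
    Tendsto z atTop (cobounded R) := by
  have hrs : r - s ≠ 0 := sub_ne_zero.mpr (by rintro rfl; exact hsr.false)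
  have hclosed : z = fun t => (z 1 - s * z 0) / (r - s) * r ^ t
      + (-(z 1 - r * z 0) / (r - s)) * s ^ t := by
    funext t
    field_simp
    linear_combination sub_mul_eq_of_recurrence hz t
  rw [hclosed]
  exact tendsto_mul_pow_add_mul_pow_cobounded _ _ (div_ne_zero (sub_ne_zero.mpr hgen) hrs) hr hsr

end Recurrence

theorem emaNesterov_dotProduct_recurrence {R ι : Type*} [CommRing R] [Fintype ι]
    {A : Matrix ι ι R} {q b : ι → R} {a η β : R} (hqA : ∀ v, q ⬝ᵥ A *ᵥ v = a * (q ⬝ᵥ v))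
    {x m mhat : ℕ → ι → R}
    (hm : ∀ t, m (t + 1) = β • m t + (1 - β) • (A *ᵥ x t + b))
    (hmhat : ∀ t, mhat (t + 1) = β • m (t + 1) + (1 - β) • (A *ᵥ x t + b))
    (hx : ∀ t, x (t + 1) = x t - η • mhat (t + 1)) (t : ℕ) :
    q ⬝ᵥ x (t + 2) = (1 + β) * (1 - η * (1 - β) * a) * (q ⬝ᵥ x (t + 1))
      - β * (1 - η * (1 - β) * a) * (q ⬝ᵥ x t) - η * (1 - β) * (q ⬝ᵥ b) := by
  have hy : ∀ t, q ⬝ᵥ x (t + 1) = q ⬝ᵥ x t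
      - η * (β * (q ⬝ᵥ m (t + 1)) + (1 - β) * (a * (q ⬝ᵥ x t) + q ⬝ᵥ b)) := fun t => by
    simp only [hx t, hmhat t, dotProduct_sub, dotProduct_add, dotProduct_smul, hqA, smul_eq_mul]
  have hp : ∀ t, q ⬝ᵥ m (t + 1) = β * (q ⬝ᵥ m t) + (1 - β) * (a * (q ⬝ᵥ x t) + q ⬝ᵥ b) :=
    fun t => by simp only [hm t, dotProduct_add, dotProduct_smul, hqA, smul_eq_mul]
  linear_combination hy (t + 1) - η * β * hp (t + 1) - β * hy t

theorem emaNesterov_unstable_eigendirection_general (n : ℕ) (A : Matrix (Fin n) (Fin n) ℝ)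
    (hA : A.IsSymm) (q : Fin n → ℝ) (a : ℝ)
    (heig : A.mulVec q = a • q) (b : Fin n → ℝ) (η β₁ : ℝ)
    (hβ0 : 0 ≤ β₁) (hβ1 : β₁ < 1) (hη : 0 < η)
    (hsharp : a > (2 + 2 * β₁) / (η * (1 - β₁) * (1 + 2 * β₁))) :
    ∃ r s ystar : ℝ,
      r ^ 2 - (1 + β₁) * (1 - η * (1 - β₁) * a) * r + β₁ * (1 - η * (1 - β₁) * a) = 0 ∧
      s ^ 2 - (1 + β₁) * (1 - η * (1 - β₁) * a) * s + β₁ * (1 - η * (1 - β₁) * a) = 0 ∧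
      |r| > 1 ∧
      ystar = (1 + β₁) * (1 - η * (1 - β₁) * a) * ystar
        - β₁ * (1 - η * (1 - β₁) * a) * ystar - η * (1 - β₁) * (q ⬝ᵥ b) ∧
      ∀ x m mhat : ℕ → Fin n → ℝ,
        (∀ t, m (t + 1) = β₁ • m t + (1 - β₁) • (A.mulVec (x t) + b)) →
        (∀ t, mhat (t + 1) = β₁ • m (t + 1) + (1 - β₁) • (A.mulVec (x t) + b)) →
        (∀ t, x (t + 1) = x t - η • mhat (t + 1)) →
        q ⬝ᵥ x 1 - ystar ≠ s * (q ⬝ᵥ x 0 - ystar) →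
        Tendsto (fun t => |q ⬝ᵥ x t|) atTop atTop := by
  set μ := 1 - η * (1 - β₁) * a
  have h1β : 0 < 1 - β₁ := by linarith
  have h2β : 0 < 1 + 2 * β₁ := by linarith
  have ha : 0 < a := lt_trans (by positivity) hsharp
  have hμ : μ * (1 + 2 * β₁) < -1 := by
    have := (div_lt_iff₀ (by positivity)).mp hsharp
    linarith
  have hμneg : μ < 0 := by nlinarith
  obtain ⟨r, s, hsum, hprod, hr, hs⟩ :=
    exists_add_eq_mul_eq_lt_neg_one_lt (P := (1 + β₁) * μ) (Q := β₁ * μ) (by linarith)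
  have hrabs : |r| = -r := abs_of_neg (by linarith)
  have hsr : |s| < |r| := by
    rw [hrabs, abs_lt]
    constructor <;> nlinarith
  set ystar := -(q ⬝ᵥ b) / a
  have hystar : ystar = (1 + β₁) * μ * ystar - β₁ * μ * ystar - η * (1 - β₁) * (q ⬝ᵥ b) := by
    simp only [ystar, μ]
    field_simp
    ring
  refine ⟨r, s, ystar, by linear_combination r * hsum - hprod, by linear_combination s * hsum - hprod,
    by linarith, hystar, fun x m mhat hm hmhat hx hgen => ?_⟩
  have hrec := emaNesterov_dotProduct_recurrence (hA.dotProduct_mulVec_of_mulVec_eq_smul heig)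
    hm hmhat hx
  have hz : Tendsto (fun t => q ⬝ᵥ x t - ystar) atTop (cobounded ℝ) :=
    tendsto_cobounded_of_recurrence (by rw [Real.norm_eq_abs, hrabs]; linarith) hsr
      (fun t => by
        linear_combination hrec t - hystar - (q ⬝ᵥ x (t + 1) - ystar) * hsum
          + (q ⬝ᵥ x t - ystar) * hprod)
      hgen
  simpa using tendsto_norm_atTop_iff_cobounded.mpr ((tendsto_add_const_cobounded ystar).comp hz)

theorem emaNesterov_unstable_eigendirection (n : ℕ) (A : Matrix (Fin n) (Fin n) ℝ)
    (hA : A.IsSymm) (q : Fin n → ℝ) (hq : q ≠ 0) (a : ℝ)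
    (heig : A.mulVec q = a • q) (b : Fin n → ℝ) (η β₁ : ℝ)
    (hβ0 : 0 ≤ β₁) (hβ1 : β₁ < 1) (hη : 0 < η)
    (hsharp : a > (2 + 2 * β₁) / (η * (1 - β₁) * (1 + 2 * β₁))) :
    ∃ r s ystar : ℝ,
      r ^ 2 - (1 + β₁) * (1 - η * (1 - β₁) * a) * r + β₁ * (1 - η * (1 - β₁) * a) = 0 ∧
      s ^ 2 - (1 + β₁) * (1 - η * (1 - β₁) * a) * s + β₁ * (1 - η * (1 - β₁) * a) = 0 ∧
      |r| > 1 ∧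
      ystar = (1 + β₁) * (1 - η * (1 - β₁) * a) * ystar
        - β₁ * (1 - η * (1 - β₁) * a) * ystar - η * (1 - β₁) * (q ⬝ᵥ b) ∧
      ∀ x m mhat : ℕ → Fin n → ℝ,
        (∀ t, m (t + 1) = β₁ • m t + (1 - β₁) • (A.mulVec (x t) + b)) →
        (∀ t, mhat (t + 1) = β₁ • m (t + 1) + (1 - β₁) • (A.mulVec (x t) + b)) →
        (∀ t, x (t + 1) = x t - η • mhat (t + 1)) →
        q ⬝ᵥ x 1 - ystar ≠ s * (q ⬝ᵥ x 0 - ystar) →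
        Tendsto (fun t => |q ⬝ᵥ x t|) atTop atTop :=
  emaNesterov_unstable_eigendirection_general n A hA q a heig b η β₁ hβ0 hβ1 hη hsharp
end

section
/- For 0 ≤ β < 1, the roots of z² − (1+β−λ)z + β are real with at least one root less than or equal to −1 if and only if λ ≥ 2 + 2β; moreover both roots lie strictly inside the unit disk for all 0 < λ < 2 + 2β. -/
/-!
Write `s = 1 + β - λ` and `p = β`, so that `z₁ + z₂ = s` and `z₁ z₂ = p`. Evaluating the
factorisation at `∓1` gives `(1 + z₁)(1 + z₂) = 2 + 2β - λ` and `(1 - z₁)(1 - z₂) = λ`.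
For real roots `x₁ x₂ = β < 1` rules out both roots lying beyond `-1` (or beyond `1`), so a root
is `≤ -1` exactly when `(1 + x₁)(1 + x₂) ≤ 0`, and for `0 < λ < 2 + 2β` both products are
positive, which traps both roots in `(-1, 1)`. For non-real roots `z₂ = z̄₁`, so `|z₁|² = β < 1`;
and such roots cannot occur when `λ ≥ 2 + 2β`, since then `s² ≥ (1 + β)² ≥ 4β`.
-/

open ComplexConjugate

def QuadraticRoots {R : Type*} [CommRing R] (s p z₁ z₂ : R) : Prop :=
  ∀ z, z ^ 2 - s * z + p = (z - z₁) * (z - z₂)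

namespace QuadraticRoots

section CommRing

variable {R : Type*} [CommRing R] {s p z₁ z₂ : R}

theorem swap (h : QuadraticRoots s p z₁ z₂) : QuadraticRoots s p z₂ z₁ :=
  fun z => (h z).trans (mul_comm _ _)

theorem mul_eq (h : QuadraticRoots s p z₁ z₂) : z₁ * z₂ = p := by
  linear_combination -h 0

theorem add_eq (h : QuadraticRoots s p z₁ z₂) : z₁ + z₂ = s := by
  linear_combination h.mul_eq + h 1

end CommRing

section Ordered

variable {R : Type*} [CommRing R] [LinearOrder R] [IsStrictOrderedRing R] {s p x₁ x₂ : R}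

theorem le_neg_one_or_le_neg_one_iff (h : QuadraticRoots s p x₁ x₂) (hp : p ≤ 1) :
    (x₁ ≤ -1 ∨ x₂ ≤ -1) ↔ 1 + s + p ≤ 0 := by
  have hm := h.mul_eq
  have hval : 1 + s + p = (1 + x₁) * (1 + x₂) := by linear_combination h (-1)
  rw [hval]
  constructor
  · rintro (h₁ | h₂)
    · have : -1 ≤ x₂ := by nlinarith
      nlinarith
    · have : -1 ≤ x₁ := by nlinarith
      nlinarith
  · intro hneg
    by_contra! hgt
    nlinarith [mul_pos (neg_lt_iff_pos_add'.mp hgt.1) (neg_lt_iff_pos_add'.mp hgt.2)]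

theorem abs_lt_one (h : QuadraticRoots s p x₁ x₂) (hp : p < 1) (hpos : 0 < 1 - s + p)
    (hneg : 0 < 1 + s + p) : |x₁| < 1 := by
  have hm := h.mul_eq
  have hval₁ : 1 - s + p = (1 - x₁) * (1 - x₂) := by linear_combination h 1
  have hval₂ : 1 + s + p = (1 + x₁) * (1 + x₂) := by linear_combination h (-1)
  rw [abs_lt]
  constructor
  · by_contra! hx
    have : x₂ < -1 := by nlinarith
    nlinarith
  · by_contra! hx
    have : 1 < x₂ := by nlinarith
    nlinarith

end Ordered

section Complex

variable {s p : ℝ} {z₁ z₂ : ℂ}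

theorem re (h : QuadraticRoots (s : ℂ) p z₁ z₂) (h₁ : z₁.im = 0) (h₂ : z₂.im = 0) :
    QuadraticRoots s p z₁.re z₂.re := by
  intro x
  apply Complex.ofReal_injective
  push_cast
  rw [Complex.conj_eq_iff_re.mp (Complex.conj_eq_iff_im.mpr h₁),
    Complex.conj_eq_iff_re.mp (Complex.conj_eq_iff_im.mpr h₂)]
  exact h x

theorem im_eq_zero_or_eq_conj (h : QuadraticRoots (s : ℂ) p z₁ z₂) :
    (z₁.im = 0 ∧ z₂.im = 0) ∨ z₂ = conj z₁ := by
  by_cases h₁ : z₁.im = 0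
  · left
    have := congrArg Complex.im h.add_eq
    simp only [Complex.add_im, Complex.ofReal_im, h₁, zero_add] at this
    exact ⟨h₁, this⟩
  · right
    have hroot : (conj z₁ - z₁) * (conj z₁ - z₂) = 0 := by
      rw [← h]
      simpa using congrArg conj (h z₁)
    have hne : conj z₁ - z₁ ≠ 0 := sub_ne_zero.mpr (mt Complex.conj_eq_iff_im.mp h₁)
    exact (sub_eq_zero.mp ((mul_eq_zero.mp hroot).resolve_left hne)).symm

theorem im_eq_zero_of_four_mul_le_sq (h : QuadraticRoots (s : ℂ) p z₁ z₂)
    (hdisc : 4 * p ≤ s ^ 2) : z₁.im = 0 ∧ z₂.im = 0 := by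
  rcases h.im_eq_zero_or_eq_conj with hreal | rfl
  · exact hreal
  have hs : 2 * z₁.re = s := by
    exact_mod_cast (Complex.add_conj z₁).symm.trans h.add_eq
  have hp : Complex.normSq z₁ = p := by
    exact_mod_cast (Complex.mul_conj z₁).symm.trans h.mul_eq
  rw [Complex.normSq_apply] at hp
  subst hs hp
  have h₁ : z₁.im = 0 :=
    mul_self_eq_zero.mp (le_antisymm (by nlinarith) (mul_self_nonneg _))
  simp [h₁]

/-- The sufficient half of the Schur–Cohn–Jury criterion for a real quadratic. -/
theorem norm_lt_one (h : QuadraticRoots (s : ℂ) p z₁ z₂) (hp : p < 1) (hpos : 0 < 1 - s + p)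
    (hneg : 0 < 1 + s + p) : ‖z₁‖ < 1 ∧ ‖z₂‖ < 1 := by
  rcases h.im_eq_zero_or_eq_conj with ⟨h₁, h₂⟩ | rfl
  · rw [← Complex.abs_re_eq_norm.mpr h₁, ← Complex.abs_re_eq_norm.mpr h₂]
    exact ⟨(h.re h₁ h₂).abs_lt_one hp hpos hneg, (h.re h₁ h₂).swap.abs_lt_one hp hpos hneg⟩
  have hnorm : ‖z₁‖ ^ 2 = p := by
    exact_mod_cast (Complex.mul_conj' z₁).symm.trans h.mul_eq
  have hz₁ : ‖z₁‖ < 1 := (sq_lt_one_iff₀ (norm_nonneg z₁)).mp (hnorm ▸ hp)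
  exact ⟨hz₁, (Complex.norm_conj z₁).symm ▸ hz₁⟩

end Complex

end QuadraticRoots

theorem heavyball_roots_real_le_neg_one_iff_general (β lam : ℝ) (hβ1 : β < 1)
    (z₁ z₂ : ℂ)
    (hfact : ∀ z : ℂ, z ^ 2 - (1 + (β : ℂ) - (lam : ℂ)) * z + (β : ℂ)
      = (z - z₁) * (z - z₂)) :
    ((z₁.im = 0 ∧ z₂.im = 0 ∧ (z₁.re ≤ -1 ∨ z₂.re ≤ -1)) ↔ lam ≥ 2 + 2 * β) ∧
    (0 < lam → lam < 2 + 2 * β → ‖z₁‖ < 1 ∧ ‖z₂‖ < 1) := by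
  have h : QuadraticRoots ((1 + β - lam : ℝ) : ℂ) β z₁ z₂ := by
    push_cast
    exact hfact
  refine ⟨⟨?_, fun hlam => ?_⟩, fun hlam₀ hlam₁ => h.norm_lt_one hβ1 (by linarith) (by linarith)⟩
  · rintro ⟨h₁, h₂, hroot⟩
    have := ((h.re h₁ h₂).le_neg_one_or_le_neg_one_iff hβ1.le).mp hroot
    linarith
  · obtain ⟨h₁, h₂⟩ := h.im_eq_zero_of_four_mul_le_sq (by nlinarith)
    exact ⟨h₁, h₂, ((h.re h₁ h₂).le_neg_one_or_le_neg_one_iff hβ1.le).mpr (by linarith)⟩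

theorem heavyball_roots_real_le_neg_one_iff (β lam : ℝ) (hβ0 : 0 ≤ β) (hβ1 : β < 1)
    (z₁ z₂ : ℂ)
    (hfact : ∀ z : ℂ, z ^ 2 - (1 + (β : ℂ) - (lam : ℂ)) * z + (β : ℂ)
      = (z - z₁) * (z - z₂)) :
    ((z₁.im = 0 ∧ z₂.im = 0 ∧ (z₁.re ≤ -1 ∨ z₂.re ≤ -1)) ↔ lam ≥ 2 + 2 * β) ∧
    (0 < lam → lam < 2 + 2 * β → ‖z₁‖ < 1 ∧ ‖z₂‖ < 1) :=
  heavyball_roots_real_le_neg_one_iff_general β lam hβ1 z₁ z₂ hfact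
end

section
/- Gradient descent with momentum is repelled from sharp regions in the following sense: if EmaHB(η, β₁) converges to a point x* of a twice continuously differentiable function f, where x* is a strict local minimum with Hessian H(x*), and convergence occurs with x_t ≠ x* for infinitely many t along the top eigendirection, then on the quadratic Taylor model at x* the top Hessian eigenvalue must satisfy λ₁(H(x*)) ≤ (2 + 2β₁)/(η(1 − β₁)); equivalently, if λ₁ exceeds this threshold then the linearized dynamics at x* are exponentially unstable. -/
/-!
Along an eigenvector `q` of `H` with eigenvalue `a`, the linearized EmaHB recursion decouples into
a scalar one, which has geometric solutions `x t - x* = ρ ^ t • q`, `m t = (δ * ρ ^ t) • q`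
exactly when `ρ` is a root of `ρ² + (η (1 - β₁) a - 1 - β₁) ρ + β₁`. This monic quadratic is
negative at `-1` precisely when `a > (2 + 2 β₁) / (η (1 - β₁))`, so it then has a root `ρ < -1`,
and the corresponding mode oscillates with geometrically growing amplitude.
-/

open Matrix

lemma exists_quadratic_root_lt_neg_one {b c : ℝ} (h : 1 - b + c < 0) :
    ∃ ρ < -1, ρ ^ 2 + b * ρ + c = 0 := by
  have hdisc : (2 - b) ^ 2 < b ^ 2 - 4 * c := by linarith
  have hsqrt_sq : √(b ^ 2 - 4 * c) ^ 2 = b ^ 2 - 4 * c :=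
    Real.sq_sqrt ((sq_nonneg _).trans hdisc.le)
  have hsqrt : 2 - b < √(b ^ 2 - 4 * c) :=
    (le_abs_self _).trans_lt (Real.lt_sqrt_of_sq_lt (by rwa [sq_abs]))
  exact ⟨(-b - √(b ^ 2 - 4 * c)) / 2, by linarith, by linear_combination hsqrt_sq / 4⟩

lemma emaHB_scalar_mode {η β a ρ : ℝ}
    (hroot : ρ ^ 2 + (η * (1 - β) * a - 1 - β) * ρ + β = 0) (hρ : ρ ≠ β) :
    ∃ δ : ℝ, δ * ρ = β * δ + (1 - β) * a ∧ ρ = 1 - η * δ * ρ := by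
  have hρβ : ρ - β ≠ 0 := sub_ne_zero.mpr hρ
  refine ⟨(1 - β) * a / (ρ - β), ?_, ?_⟩
  · field_simp
    ring
  · field_simp
    linear_combination hroot

section Eigenmode

variable {R ι : Type*} [CommRing R] {H : Matrix ι ι R} {q xstar : ι → R}
  {a η β ρ δ : R}

lemma emaHB_eigenmode_momentum [Fintype ι] (heig : H *ᵥ q = a • q) (hm : δ * ρ = β * δ + (1 - β) * a)
    (t : ℕ) :
    (δ * ρ ^ (t + 1)) • q = β • (δ * ρ ^ t) • q + (1 - β) • H *ᵥ (xstar + ρ ^ t • q - xstar) := by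
  rw [add_sub_cancel_left, mulVec_smul, heig, smul_smul, smul_smul, smul_smul, ← add_smul]
  congr 1
  linear_combination ρ ^ t * hm

lemma emaHB_eigenmode_iterate (hx : ρ = 1 - η * δ * ρ) (t : ℕ) :
    xstar + ρ ^ (t + 1) • q = xstar + ρ ^ t • q - η • (δ * ρ ^ (t + 1)) • q := by
  rw [add_sub_assoc, smul_smul, ← sub_smul]
  congr 2
  linear_combination ρ ^ t * hx

end Eigenmode

theorem emaHB_linearized_instability_at_sharp_minimum_general (n : ℕ)
    (H : Matrix (Fin n) (Fin n) ℝ)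
    (xstar : Fin n → ℝ) (q : Fin n → ℝ) (hq : q ≠ 0) (a : ℝ)
    (heig : H.mulVec q = a • q) (η β₁ : ℝ)
    (hβ0 : 0 ≤ β₁) (hβ1 : β₁ < 1) (hη : 0 < η)
    (hsharp : a > (2 + 2 * β₁) / (η * (1 - β₁))) :
    ∃ x m : ℕ → Fin n → ℝ,
      (∀ t, m (t + 1) = β₁ • m t + (1 - β₁) • H.mulVec (x t - xstar)) ∧
      (∀ t, x (t + 1) = x t - η • m (t + 1)) ∧
      ∃ ρ C : ℝ, 1 < ρ ∧ 0 < C ∧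
        ∀ t, C * ρ ^ t ≤ |q ⬝ᵥ (x t - xstar)| := by
  have hsharp' : 2 + 2 * β₁ < η * (1 - β₁) * a :=
    (div_lt_iff₀' (by nlinarith)).mp hsharp
  obtain ⟨ρ, hρ, hroot⟩ :=
    exists_quadratic_root_lt_neg_one (b := η * (1 - β₁) * a - 1 - β₁) (c := β₁) (by linarith)
  obtain ⟨δ, hm, hx⟩ := emaHB_scalar_mode hroot (by linarith)
  have hqq : 0 < q ⬝ᵥ q := by simpa using dotProduct_star_self_pos_iff.mpr hq
  refine ⟨fun t => xstar + ρ ^ t • q, fun t => (δ * ρ ^ t) • q,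
    emaHB_eigenmode_momentum heig hm, emaHB_eigenmode_iterate hx, -ρ, q ⬝ᵥ q, by linarith, hqq,
    fun t => ?_⟩
  rw [add_sub_cancel_left, dotProduct_smul, smul_eq_mul, abs_mul, abs_of_pos hqq, abs_pow,
    abs_of_neg (by linarith), mul_comm]

theorem emaHB_linearized_instability_at_sharp_minimum (n : ℕ)
    (H : Matrix (Fin n) (Fin n) ℝ) (hH : H.IsSymm)
    (xstar : Fin n → ℝ) (q : Fin n → ℝ) (hq : q ≠ 0) (a : ℝ)
    (heig : H.mulVec q = a • q) (η β₁ : ℝ)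
    (hβ0 : 0 ≤ β₁) (hβ1 : β₁ < 1) (hη : 0 < η)
    (hsharp : a > (2 + 2 * β₁) / (η * (1 - β₁))) :
    ∃ x m : ℕ → Fin n → ℝ,
      (∀ t, m (t + 1) = β₁ • m t + (1 - β₁) • H.mulVec (x t - xstar)) ∧
      (∀ t, x (t + 1) = x t - η • m (t + 1)) ∧
      ∃ ρ C : ℝ, 1 < ρ ∧ 0 < C ∧
        ∀ t, C * ρ ^ t ≤ |q ⬝ᵥ (x t - xstar)| :=
  emaHB_linearized_instability_at_sharp_minimum_general n H xstar q hq a heig η β₁ hβ0 hβ1 hη hsharp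
end

section
/- For vanilla GD on a 1-D quadratic with curvature a and step η, if a = (1+ε)·(2/η) for ε > 0 then the asymptotic growth factor per step is 1 + 2ε; for standard heavy-ball with β = 0.9, at curvature (1+ε) times its threshold (2+2β)/η, the largest root magnitude of z² − (1+β−(1+ε)(2+2β))z + β is strictly larger than 1 + 2ε for all sufficiently small ε > 0. -/
/-!
The gradient-descent part is a direct computation: `1 - η a = -(1 + 2ε)`.

For heavy ball with momentum `β > 0`, put `t = 1 + 2ε`. The characteristic polynomial is
`z² + (1 + β) t z + β`, whose value at `z = -t` is `β (1 - t²) < 0`. A monic real quadratic that is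
negative at a point has a root to the left of it, so some root has magnitude larger than `t`;
this holds for every `ε > 0`, not only for small ones.
-/

theorem exists_root_lt_of_sq_sub_mul_add_neg {b c x : ℝ} (h : x ^ 2 - b * x + c < 0) :
    ∃ z : ℝ, z ^ 2 - b * z + c = 0 ∧ z < x := by
  have hdiscr : (b - 2 * x) ^ 2 < b ^ 2 - 4 * c := by nlinarith
  set r := Real.sqrt (b ^ 2 - 4 * c)
  have hr_sq : r ^ 2 = b ^ 2 - 4 * c := Real.sq_sqrt (by nlinarith [sq_nonneg (b - 2 * x)])
  have hr : b - 2 * x < r := Real.lt_sqrt_of_sq_lt hdiscr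
  exact ⟨(b - r) / 2, by linear_combination hr_sq / 4, by linarith⟩

theorem one_sub_mul_mul_two_div {η : ℝ} (hη : η ≠ 0) (ε : ℝ) :
    1 - η * ((1 + ε) * (2 / η)) = -(1 + 2 * ε) := by
  field_simp
  ring

theorem exists_heavyBall_root_one_add_two_mul_lt_abs {β ε : ℝ} (hβ : 0 < β) (hε : 0 < ε) :
    ∃ z : ℝ, z ^ 2 - (1 + β - (1 + ε) * (2 + 2 * β)) * z + β = 0 ∧ 1 + 2 * ε < |z| := by
  have hneg : (-(1 + 2 * ε)) ^ 2 - (1 + β - (1 + ε) * (2 + 2 * β)) * -(1 + 2 * ε) + β < 0 := by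
    have hvalue : (-(1 + 2 * ε)) ^ 2 - (1 + β - (1 + ε) * (2 + 2 * β)) * -(1 + 2 * ε) + β
        = -(β * (4 * ε * (1 + ε))) := by ring
    rw [hvalue, neg_neg_iff_pos]
    positivity
  obtain ⟨z, hz, hlt⟩ := exists_root_lt_of_sq_sub_mul_add_neg hneg
  exact ⟨z, hz, by rw [abs_of_neg (by linarith)]; linarith⟩

theorem growth_factor_comparison (η : ℝ) (hη : 0 < η) :
    (∀ ε a : ℝ, 0 < ε → a = (1 + ε) * (2 / η) → |1 - η * a| = 1 + 2 * ε) ∧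
    (∃ ε₀ : ℝ, 0 < ε₀ ∧ ∀ ε : ℝ, 0 < ε → ε < ε₀ →
      ∃ z : ℝ, z ^ 2 - (1 + 0.9 - (1 + ε) * (2 + 2 * 0.9)) * z + 0.9 = 0 ∧
        1 + 2 * ε < |z|) := by
  refine ⟨fun ε a hε ha => ?_, ⟨1, one_pos, fun ε hε _ => ?_⟩⟩
  · rw [ha, one_sub_mul_mul_two_div hη.ne', abs_neg, abs_of_pos (by linarith)]
  · exact exists_heavyBall_root_one_add_two_mul_lt_abs (by norm_num) hε
end
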